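/- For any family F of real-valued functions on M, the topology generated by the differential structure (scF)_M equals the initial topology τ_F induced by F. -/
import Mathlib


/-- The initial (weakest) topology on `M` making all functions in `C` continuous. -/
def tau {M : Type*} (C : Set (M → ℝ)) : TopologicalSpace M :=
  ⨅ f ∈ C, TopologicalSpace.induced f inferInstance

/-- Local `C`-functions on `M`: functions locally agreeing with elements of `C`. -/
def localFuncs {M : Type*} (C : Set (M → ℝ)) : Set (M → ℝ) :=
  {f | ∀ p : M, ∃ V : Set M, (tau C).IsOpen V ∧ p ∈ V ∧ ∃ α ∈ C, ∀ x ∈ V, f x = α x}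

/-- The closure of `C` under superposition with smooth functions. -/
def sc {M : Type*} (C : Set (M → ℝ)) : Set (M → ℝ) :=
  {f | ∃ (n : ℕ) (ω : (Fin n → ℝ) → ℝ) (α : Fin n → (M → ℝ)),
    ContDiff ℝ (⊤ : ℕ∞) ω ∧ (∀ i, α i ∈ C) ∧ f = fun p => ω (fun i => α i p)}

/-- A Sikorski differential structure. -/
def IsDiffStructure {M : Type*} (C : Set (M → ℝ)) : Prop :=
  localFuncs C = C ∧ sc C = C

lemma tau_antitone {M : Type*} {C D : Set (M → ℝ)} (h : C ⊆ D) : tau D ≤ tau C :=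
  le_iInf₂ fun f hf => iInf₂_le f (h hf)

lemma cont_of_mem {M : Type*} {C : Set (M → ℝ)} {f : M → ℝ} (hf : f ∈ C) :
    @Continuous M ℝ (tau C) _ f := by
  letI := tau C
  exact continuous_iff_le_induced.2 (iInf₂_le f hf)

lemma subset_sc {M : Type*} (F : Set (M → ℝ)) : F ⊆ sc F := fun f hf =>
  ⟨1, fun v => v 0, fun _ => f,
    (ContinuousLinearMap.proj (R := ℝ) (φ := fun _ : Fin 1 => ℝ) 0).contDiff,
    fun _ => hf, rfl⟩

lemma tau_sc {M : Type*} (F : Set (M → ℝ)) : tau (sc F) = tau F := by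
  refine le_antisymm (tau_antitone (subset_sc F)) (le_iInf₂ fun g hg => ?_)
  obtain ⟨n, ω, α, hω, hα, rfl⟩ := hg
  letI := tau F
  have hcont : Continuous (fun p => ω fun i => α i p) :=
    hω.continuous.comp (continuous_pi fun i => cont_of_mem (hα i))
  exact continuous_iff_le_induced.1 hcont

lemma subset_localFuncs {M : Type*} (C : Set (M → ℝ)) : C ⊆ localFuncs C := fun f hf p =>
  ⟨Set.univ, (tau C).isOpen_univ, trivial, f, hf, fun _ _ => rfl⟩

/-- τ_{(scF)_M} = τ_F. -/
theorem stmt6 {M : Type*} [Nonempty M] (F : Set (M → ℝ)) :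
    tau (localFuncs (sc F)) = tau F := by
  refine le_antisymm (tau_antitone fun f hf => subset_localFuncs _ (subset_sc F hf))
    (le_iInf₂ fun g hg => ?_)
  letI : TopologicalSpace M := tau F
  refine continuous_iff_le_induced.1 (continuous_iff_continuousAt.2 fun p => ?_)
  obtain ⟨V, hVopen, hpV, α, hα, heq⟩ := hg p
  rw [tau_sc] at hVopen
  have hVopen' : IsOpen V := hVopen
  have hαc : Continuous α := by
    have := cont_of_mem hα
    rwa [tau_sc] at this
  refine hαc.continuousAt.congr ?_
  filter_upwards [hVopen'.mem_nhds hpV] with x hx using (heq x hx).symm
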